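/- Let Ω ⊂ ℝ^d (d ≥ 1) be a bounded domain, p ∈ (0,1), β > 0, α ≥ 0, ε ≥ 0, and let a, b ∈ L²(Ω) with a < b a.e. Let u, d ∈ L²(Ω) with a ≤ u ≤ b a.e. For each t > 0 let v_t be any global minimizer over U_ad = {v ∈ L²(Ω) : a ≤ v ≤ b a.e.} of v ↦ (1/(2t))‖v − (u + t·d)‖²_{L²} + β∫_Ω ψ_ε(v(x)²) dx + (α/2)‖v‖²_{L²}. Then ‖v_t − u‖_{L²(Ω)} → 0 as t → 0⁺. -/
import Mathlib


open MeasureTheory Filter Topology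

/-- The smooth approximation `ψ_ε` of `t ↦ t^{p/2}`:
`ψ_ε(t) = (p/2)·t/ε^{2−p} + (1 − p/2)·ε^p` for `0 ≤ t < ε²` and `ψ_ε(t) = t^{p/2}` for
`t ≥ ε²` (so `ψ_0(t) = t^{p/2}`). Exponents are real powers. -/
noncomputable def psi (p ε t : ℝ) : ℝ :=
  if t < ε ^ 2 then p / 2 * t / ε ^ (2 - p) + (1 - p / 2) * ε ^ p
  else t ^ (p / 2)

lemma psi_nonneg {p ε : ℝ} (hp0 : 0 < p) (hp1 : p < 1) (hε : 0 ≤ ε) {s : ℝ} (hs : 0 ≤ s) :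
    0 ≤ psi p ε s := by
  unfold psi
  split_ifs with h
  · have h1 : (0:ℝ) ≤ ε ^ (2 - p) := Real.rpow_nonneg hε _
    have h2 : (0:ℝ) ≤ ε ^ p := Real.rpow_nonneg hε _
    have h3 : (0:ℝ) ≤ p / 2 * s / ε ^ (2 - p) := by positivity
    nlinarith
  · exact Real.rpow_nonneg hs _

set_option maxHeartbeats 1000000 in
/-- if for every `t > 0` the function `v t` is a global minimizer over
`U_ad = {a ≤ v ≤ b}` of
`v ↦ (1/(2t))‖v − (u + t d)‖² + β∫_Ω ψ_ε(v²) dx + (α/2)‖v‖²`, then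
`‖v_t − u‖_{L²} → 0` as `t → 0⁺`. -/
theorem prox_path_tendsto
    {d : ℕ} (hd : 1 ≤ d) (Ω : Set (EuclideanSpace ℝ (Fin d)))
    (hΩ_open : IsOpen Ω) (hΩ_conn : IsConnected Ω) (hΩ_bdd : Bornology.IsBounded Ω)
    (p β α ε : ℝ) (hp0 : 0 < p) (hp1 : p < 1) (hβ : 0 < β) (hα : 0 ≤ α) (hε : 0 ≤ ε)
    (a b u dir : Lp ℝ 2 (volume.restrict Ω))
    (hab : ∀ᵐ x ∂(volume.restrict Ω), a x < b x)
    (hu : ∀ᵐ x ∂(volume.restrict Ω), a x ≤ u x ∧ u x ≤ b x)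
    (v : ℝ → Lp ℝ 2 (volume.restrict Ω))
    (hfeas : ∀ t : ℝ, 0 < t →
      ∀ᵐ x ∂(volume.restrict Ω), a x ≤ v t x ∧ v t x ≤ b x)
    (hmin : ∀ t : ℝ, 0 < t → ∀ w : Lp ℝ 2 (volume.restrict Ω),
      (∀ᵐ x ∂(volume.restrict Ω), a x ≤ w x ∧ w x ≤ b x) →
      1 / (2 * t) * ‖v t - (u + t • dir)‖ ^ 2 +
          β * ∫ x, psi p ε (v t x ^ 2) ∂(volume.restrict Ω) + α / 2 * ‖v t‖ ^ 2 ≤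
        1 / (2 * t) * ‖w - (u + t • dir)‖ ^ 2 +
          β * ∫ x, psi p ε (w x ^ 2) ∂(volume.restrict Ω) + α / 2 * ‖w‖ ^ 2) :
    Tendsto (fun t : ℝ => ‖v t - u‖) (nhdsWithin 0 (Set.Ioi 0)) (nhds 0) := by
  set K : ℝ := β * (∫ x, psi p ε (u x ^ 2) ∂(volume.restrict Ω)) + α / 2 * ‖u‖ ^ 2 with hK_def
  have hKu : (0:ℝ) ≤ ∫ x, psi p ε (u x ^ 2) ∂(volume.restrict Ω) :=
    integral_nonneg fun x => psi_nonneg hp0 hp1 hε (sq_nonneg _)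
  have hK : 0 ≤ K := by positivity
  set g : ℝ → ℝ := fun t => Real.sqrt (t ^ 2 * ‖dir‖ ^ 2 + 2 * t * K) + t * ‖dir‖ with hg_def
  have hbound : ∀ t : ℝ, 0 < t → ‖v t - u‖ ≤ g t := by
    intro t ht
    have h1 := hmin t ht u hu
    have hψv : (0:ℝ) ≤ ∫ x, psi p ε (v t x ^ 2) ∂(volume.restrict Ω) :=
      integral_nonneg fun x => psi_nonneg hp0 hp1 hε (sq_nonneg _)
    have hnu : ‖u - (u + t • dir)‖ = t * ‖dir‖ := by
      have : u - (u + t • dir) = -(t • dir) := by abel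
      rw [this, norm_neg, norm_smul, Real.norm_eq_abs, abs_of_pos ht]
    set X := ‖v t - (u + t • dir)‖ with hX
    have h2 : 1 / (2 * t) * X ^ 2 ≤ 1 / (2 * t) * (t * ‖dir‖) ^ 2 + K := by
      rw [hnu] at h1
      have hβψ : 0 ≤ β * ∫ x, psi p ε (v t x ^ 2) ∂(volume.restrict Ω) := mul_nonneg hβ.le hψv
      have hαv : 0 ≤ α / 2 * ‖v t‖ ^ 2 := by positivity
      rw [hK_def]; linarith
    have h3 : X ^ 2 ≤ t ^ 2 * ‖dir‖ ^ 2 + 2 * t * K := by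
      have h4 : X ^ 2 = 2 * t * (1 / (2 * t) * X ^ 2) := by field_simp
      have h5 := mul_le_mul_of_nonneg_left h2 (by positivity : (0:ℝ) ≤ 2 * t)
      rw [h4]
      calc 2 * t * (1 / (2 * t) * X ^ 2) ≤ 2 * t * (1 / (2 * t) * (t * ‖dir‖) ^ 2 + K) := h5
        _ = t ^ 2 * ‖dir‖ ^ 2 + 2 * t * K := by field_simp
    have h6 : X ≤ Real.sqrt (t ^ 2 * ‖dir‖ ^ 2 + 2 * t * K) := by
      have := Real.sqrt_le_sqrt h3
      rwa [Real.sqrt_sq (norm_nonneg _)] at this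
    have h7 : ‖v t - u‖ ≤ X + t * ‖dir‖ := by
      have : v t - u = (v t - (u + t • dir)) + t • dir := by abel
      rw [this]
      calc ‖(v t - (u + t • dir)) + t • dir‖ ≤ X + ‖t • dir‖ := norm_add_le _ _
        _ = X + t * ‖dir‖ := by
            rw [norm_smul, Real.norm_eq_abs, abs_of_pos ht]
    calc ‖v t - u‖ ≤ X + t * ‖dir‖ := h7
      _ ≤ g t := by simpa [hg_def] using add_le_add_right h6 (t * ‖dir‖)
  have hgc : Continuous g := by
    have h1 : Continuous fun t : ℝ => t ^ 2 * ‖dir‖ ^ 2 + 2 * t * K :=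
      ((continuous_pow 2).mul continuous_const).add
        ((continuous_const.mul continuous_id).mul continuous_const)
    exact (Real.continuous_sqrt.comp h1).add (continuous_id.mul continuous_const)
  have hg0 : g 0 = 0 := by simp [hg_def]
  have hg : Tendsto g (nhdsWithin 0 (Set.Ioi 0)) (nhds 0) := by
    have := hgc.tendsto 0
    rw [hg0] at this
    exact this.mono_left nhdsWithin_le_nhds
  apply tendsto_of_tendsto_of_tendsto_of_le_of_le' tendsto_const_nhds hg
  · filter_upwards with t using norm_nonneg _
  · filter_upwards [self_mem_nhdsWithin] with t ht using hbound t ht
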